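/- arXiv:1907.06263 — 2 statements merged into one kernel-verified Lean document; each statement's English description precedes it below -/
import Mathlib

section
/- With ξ_λ a highest weight unit vector of the irreducible unitary representation (H_λ, π) of G and λ(X) = -i⟨ξ_λ, π_X ξ_λ⟩, for every positive root α the number i·λ(H_α) is a nonnegative integer, equal to ‖π_{F_α} ξ_λ‖²; that is, λ is a dominant integral weight. -/
/-!
STATEMENT 7.  Same setting as Statement 6: `(H_λ, π)` an irreducible unitary
representation of the compact connected semisimple `G` (encoded at the Lie algebra
level), with `sl(2,ℂ)`-triples `(H_α, E_α, F_α)` for the positive roots, a highest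
weight unit vector `ξ`, and `λ(W) = -i⟨ξ, π_W ξ⟩`.  As in the paper, the triple
generates via `π` a representation of `sl(2,ℂ)`, so the spectrum of `π_{H_α}`
consists of integers (taken as a hypothesis here).

The theorem: for every positive root `α`, the number `i·λ(H_α)` is a nonnegative
integer, equal to `‖π_{F_α} ξ‖²`; that is, `λ` is a dominant integral weight.
-/

open scoped TensorProduct InnerProductSpace
open Complex

/-- The canonical embedding `𝔤 → ℂ ⊗[ℝ] 𝔤`. -/
noncomputable def iotaC (𝔤 : Type*) [LieRing 𝔤] [LieAlgebra ℝ 𝔤] : 𝔤 →ₗ[ℝ] ℂ ⊗[ℝ] 𝔤 :=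
  TensorProduct.mk ℝ ℂ 𝔤 1

/-- The involution `(X + iY)* = -X + iY` on `𝔤^ℂ = ℂ ⊗[ℝ] 𝔤`. -/
noncomputable def gstar (𝔤 : Type*) [LieRing 𝔤] [LieAlgebra ℝ 𝔤] (W : ℂ ⊗[ℝ] 𝔤) :
    ℂ ⊗[ℝ] 𝔤 :=
  - (TensorProduct.map Complex.conjAe.toLinearMap LinearMap.id W)

theorem statement7
    (𝔤 : Type*) [LieRing 𝔤] [LieAlgebra ℝ 𝔤] [Module.Finite ℝ 𝔤]
    (hcpt : ∀ X : 𝔤, X ≠ 0 → 0 < - killingForm ℝ 𝔤 X X)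
    (H : Type*) [NormedAddCommGroup H] [InnerProductSpace ℂ H] [FiniteDimensional ℂ H]
    [Nontrivial H]
    (π₀ : 𝔤 →ₗ[ℝ] (H →ₗ[ℂ] H))
    (hπbracket : ∀ X Y : 𝔤, π₀ ⁅X, Y⁆ = π₀ X ∘ₗ π₀ Y - π₀ Y ∘ₗ π₀ X)
    (hskew : ∀ X : 𝔤, LinearMap.adjoint (π₀ X) = - π₀ X)
    (hirr : ∀ p : Submodule ℂ H, (∀ (X : 𝔤), ∀ v ∈ p, π₀ X v ∈ p) → p = ⊥ ∨ p = ⊤)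
    (πC : ℂ ⊗[ℝ] 𝔤 →ₗ[ℂ] (H →ₗ[ℂ] H))
    (hπC : πC = LinearMap.liftBaseChange ℂ π₀)
    -- (established earlier): (π_W)* = π_{W*} on 𝔤^ℂ, and πC respects brackets
    (hadj : ∀ W : ℂ ⊗[ℝ] 𝔤, LinearMap.adjoint (πC W) = πC (gstar 𝔤 W))
    (hπCbracket : ∀ W Z : ℂ ⊗[ℝ] 𝔤, πC ⁅W, Z⁆ = πC W ∘ₗ πC Z - πC Z ∘ₗ πC W)
    -- Cartan subalgebra and sl(2,ℂ)-triples (H_α, E_α, F_α) for α ∈ Δ⁺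
    (𝔥 : LieSubalgebra ℝ 𝔤) [𝔥.IsCartanSubalgebra]
    (idx : Type*) (Eroot Froot Hroot : idx → ℂ ⊗[ℝ] 𝔤)
    (hF : ∀ i, Froot i = gstar 𝔤 (Eroot i))
    (hH : ∀ i, Hroot i = ⁅Eroot i, gstar 𝔤 (Eroot i)⁆)
    (hHih : ∀ i, ∃ Hh : 𝔥, Hroot i = Complex.I • iotaC 𝔤 (Hh : 𝔤))
    (hHE : ∀ i, ⁅Hroot i, Eroot i⁆ = (2 : ℂ) • Eroot i)
    (hHF : ∀ i, ⁅Hroot i, Froot i⁆ = (-2 : ℂ) • Froot i)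
    -- highest weight unit vector ξ
    (ξ : H) (hnorm : ‖ξ‖ = 1)
    (μ : Module.Dual ℝ 𝔥)
    (hweight : ∀ Hh : 𝔥, πC (iotaC 𝔤 (Hh : 𝔤)) ξ = ((μ Hh : ℂ) * Complex.I) • ξ)
    (hhw : ∀ i : idx, πC (Eroot i) ξ = 0)
    -- λ extended ℂ-linearly to 𝔤^ℂ
    -- the spectrum of π_{H_α} consists of integers
    (hspec : ∀ i : idx, ∀ z ∈ spectrum ℂ (πC (Hroot i)), ∃ n : ℤ, z = (n : ℂ))
    (lamC : ℂ ⊗[ℝ] 𝔤 → ℂ)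
    (hlamC : ∀ W : ℂ ⊗[ℝ] 𝔤, lamC W = - Complex.I * ⟪ξ, πC W ξ⟫_ℂ) :
    ∀ i : idx, ∃ n : ℕ,
      Complex.I * lamC (Hroot i) = (n : ℂ) ∧
      (n : ℝ) = ‖πC (Froot i) ξ‖ ^ 2 := by
  intro i
  obtain ⟨Hh, hHh⟩ := hHih i
  have hxne : ξ ≠ 0 := by
    intro h
    rw [h, norm_zero] at hnorm
    exact one_ne_zero hnorm.symm
  -- ξ is an eigenvector of πC (Hroot i) with eigenvalue -(μ Hh)
  have heig : πC (Hroot i) ξ = (-(μ Hh : ℂ)) • ξ := by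
    rw [hHh, map_smul, LinearMap.smul_apply, hweight, smul_smul]
    congr 1
    have : Complex.I * Complex.I = -1 := Complex.I_mul_I
    ring_nf
    rw [Complex.I_sq]; ring
  have hinner : ⟪ξ, πC (Hroot i) ξ⟫_ℂ = -(μ Hh : ℂ) := by
    rw [heig, inner_smul_right]
    have h1 : ⟪ξ, ξ⟫_ℂ = 1 := by
      rw [inner_self_eq_norm_sq_to_K, hnorm]; norm_num
    rw [h1, mul_one]
  -- ⟪ξ, πC (Hroot i) ξ⟫ = ‖πC (Froot i) ξ‖²
  have hF2 : ⟪ξ, πC (Hroot i) ξ⟫_ℂ = (‖πC (Froot i) ξ‖ : ℂ) ^ 2 := by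
    have hbr := hπCbracket (Eroot i) (gstar 𝔤 (Eroot i))
    rw [hH i, hbr]
    rw [← hF i]
    simp only [LinearMap.sub_apply, LinearMap.comp_apply, hhw i, map_zero, sub_zero]
    have hadj' : ⟪ξ, πC (Eroot i) (πC (Froot i) ξ)⟫_ℂ
        = ⟪πC (Froot i) ξ, πC (Froot i) ξ⟫_ℂ := by
      rw [← LinearMap.adjoint_inner_left, hadj, ← hF i]
    rw [hadj', inner_self_eq_norm_sq_to_K]
    norm_num
  -- eigenvalue is in the spectrum, hence an integer
  have hmem : (-(μ Hh : ℂ)) ∈ spectrum ℂ (πC (Hroot i)) := by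
    rw [← Module.End.hasEigenvalue_iff_mem_spectrum]
    exact Module.End.hasEigenvalue_of_hasEigenvector
      ⟨Module.End.mem_eigenspace_iff.mpr heig, hxne⟩
  obtain ⟨m, hm⟩ := hspec i _ hmem
  have hmval : (m : ℂ) = (‖πC (Froot i) ξ‖ : ℂ) ^ 2 := by
    rw [← hm, ← hF2, hinner]
  have hmr : (m : ℝ) = ‖πC (Froot i) ξ‖ ^ 2 := by
    exact_mod_cast hmval
  have hm0 : 0 ≤ m := by
    have : (0 : ℝ) ≤ (m : ℝ) := hmr ▸ sq_nonneg _
    exact_mod_cast this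
  refine ⟨m.toNat, ?_, ?_⟩
  · rw [hlamC, ← mul_assoc]
    have : Complex.I * -Complex.I = 1 := by
      rw [mul_neg, Complex.I_mul_I]; ring
    rw [this, one_mul, hinner, hm]
    exact_mod_cast congrArg (Int.cast : ℤ → ℂ) (Int.toNat_of_nonneg hm0).symm
  · rw [← hmr]
    norm_cast
    exact Int.toNat_of_nonneg hm0
end

section
/- Main Theorem 4.1: Let (H_λ, π) be an irreducible unitary representation of G, B = B(H_λ) the algebra of all operators on H_λ, and for T ∈ B define dT ∈ B ⊗ g' by (dT)(X) = [π_X, T]. Let g_λ be the sum of the minimal ideals of g on which π is faithful (so g = g_λ ⊕ ker π), and identify g_λ' with the functionals on g vanishing on ker π. Then the B-bimodule generated by the range of d is exactly B ⊗ g_λ'. In particular, if π is faithful on g, the B-bimodule generated by the range of d is all of B ⊗ g'. -/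
/-!
STATEMENT 15 (Main Theorem 4.1).  `G` is a compact connected semisimple Lie group
with Lie algebra `𝔤` (encoded by positive definiteness of the negative of the
Killing form), and `(H_λ, π)` an irreducible unitary representation of `G`,
encoded by the induced irreducible representation `π₀` of `𝔤` by skew-adjoint
operators.  `B = B(H_λ)` is the algebra of all operators on `H_λ`, and
`B ⊗ 𝔤'` is realized as the `B`-bimodule of `ℝ`-linear maps `𝔤 → B`.  The
derivation `d : B → B ⊗ 𝔤'` is `(dT)(X) = ⁅π_X, T⁆ = π₀ X * T - T * π₀ X`.
`genBimod` is the `B`-sub-bimodule generated by the range of `d`: the smallest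
subspace containing all `dT` and stable under left and right multiplication
by elements of `B`.

The theorem: `genBimod` is exactly `B ⊗ 𝔤_λ'`, the maps `ω : 𝔤 → B` vanishing
on the kernel `𝔤₀ = ker π₀` (so that, identifying `𝔤 = 𝔤_λ ⊕ 𝔤₀`, it is
`B ⊗ 𝔤_λ'`); in particular, if `π₀` is faithful, it is all of `B ⊗ 𝔤'`.
-/

open scoped TensorProduct InnerProductSpace

section

variable (𝔤 : Type*) [LieRing 𝔤] [LieAlgebra ℝ 𝔤] [Module.Finite ℝ 𝔤]
variable (H : Type*) [NormedAddCommGroup H] [InnerProductSpace ℂ H] [FiniteDimensional ℂ H]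

/-- `(dT)(X) = [π_X, T]`, as an `ℝ`-linear map from `𝔤` to `B = B(H)`. -/
noncomputable def dmap (π₀ : 𝔤 →ₗ[ℝ] Module.End ℂ H) (T : Module.End ℂ H) :
    𝔤 →ₗ[ℝ] Module.End ℂ H :=
  (LinearMap.mulRight ℝ T - LinearMap.mulLeft ℝ T) ∘ₗ π₀

/-- The `B`-sub-bimodule of `B ⊗ 𝔤' = Hom_ℝ(𝔤, B)` generated by the range of `d`:
the smallest subspace that contains every `dT` and is stable under left and right
multiplication by operators. -/
noncomputable def genBimod (π₀ : 𝔤 →ₗ[ℝ] Module.End ℂ H) :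
    Submodule ℂ (𝔤 →ₗ[ℝ] Module.End ℂ H) :=
  sInf {M : Submodule ℂ (𝔤 →ₗ[ℝ] Module.End ℂ H) |
    (∀ T : Module.End ℂ H, dmap 𝔤 H π₀ T ∈ M) ∧
    (∀ ω ∈ M, ∀ S : Module.End ℂ H,
      (LinearMap.mulLeft ℝ S ∘ₗ ω) ∈ M ∧ (LinearMap.mulRight ℝ S ∘ₗ ω) ∈ M)}

end

/-!
Each `dT` vanishes on `ker π`, and so does everything in the bimodule it generates. Conversely,
sandwiching `dT` between rank-one operators puts `(X ↦ ⟪ξ, [π_X, T] η⟫) ⊗ S` into the bimodule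
for all `ξ, η, S`; skew-adjointness of `π` makes `d(T*)` produce the complex conjugate
coefficient, so the real parts `φ ⊗ S` lie in it too. If all these real functionals vanish at `X`,
then `π_X` commutes with every operator, so it is a scalar, and it is traceless because
`𝔤 = [𝔤, 𝔤]` (the Killing form is definite); hence `π_X = 0`. By duality in `𝔤'` every
functional vanishing on `ker π` is such a `φ`, and expanding `ω` in a real basis of `B` finishes.
-/

open InnerProductSpace LieAlgebra

lemma LieAlgebra.isKilling_of_killingForm_self_eq_zero {K L : Type*} [Field K] [LieRing L]
    [LieAlgebra K L] [Module.Finite K L] (h : ∀ x : L, killingForm K L x x = 0 → x = 0) :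
    IsKilling K L where
  killingCompl_top_eq_bot :=
    (LieSubmodule.eq_bot_iff _).2 fun x hx => h x ((LieIdeal.mem_killingCompl K L ⊤).1 hx x trivial)

lemma LieAlgebra.derivedSeries_one_eq_top_of_isKilling {K L : Type*} [Field K] [LieRing L]
    [LieAlgebra K L] [Module.Finite K L] [IsKilling K L] : derivedSeries K L 1 = ⊤ := by
  set I := derivedSeries K L 1
  suffices hI : I.killingCompl K L = ⊥ from
    eq_top_of_isCompl_bot (hI ▸ LieIdeal.isCompl_killingCompl I)
  have hinj : Function.Injective (killingForm K L) :=
    LinearMap.ker_eq_bot.1 (IsKilling.ker_killingForm_eq_bot K L)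
  rw [LieSubmodule.eq_bot_iff]
  intro x hx
  have hkill : ∀ y z : L, killingForm K L ⁅y, z⁆ x = 0 := fun y z =>
    (LieIdeal.mem_killingCompl K L I).1 hx _
      (LieSubmodule.lie_mem_lie (LieSubmodule.mem_top y) (LieSubmodule.mem_top z))
  -- by invariance of the Killing form, `x` is central
  have had : ad K L x = 0 := LinearMap.ext fun y => hinj <| by
    ext z
    rw [ad_apply, LieModule.traceForm_apply_lie_apply, LieModule.traceForm_comm, hkill,
      LinearMap.zero_apply, map_zero, LinearMap.zero_apply]
  exact hinj <| by ext z; simp [killingForm_apply_apply, had]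

lemma trace_eq_zero_of_derivedSeries_eq_top {𝔤 : Type*} [LieRing 𝔤] [LieAlgebra ℝ 𝔤]
    (h : derivedSeries ℝ 𝔤 1 = ⊤) {V : Type*} [AddCommGroup V] [Module ℂ V]
    (π₀ : 𝔤 →ₗ[ℝ] Module.End ℂ V) (hπ : ∀ X Y : 𝔤, π₀ ⁅X, Y⁆ = π₀ X * π₀ Y - π₀ Y * π₀ X)
    (X : 𝔤) : LinearMap.trace ℂ V (π₀ X) = 0 := by
  have hX : X ∈ Submodule.span ℝ {⁅x, y⁆ | (x : 𝔤) (y : 𝔤)} := by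
    rw [← coe_derivedSeries_one_eq, h]; trivial
  suffices Submodule.span ℝ {⁅x, y⁆ | (x : 𝔤) (y : 𝔤)} ≤
      LinearMap.ker ((LinearMap.trace ℂ V).restrictScalars ℝ ∘ₗ π₀) from this hX
  rw [Submodule.span_le]
  rintro _ ⟨x, y, rfl⟩
  simp [hπ, LinearMap.trace_mul_comm]

lemma Module.End.eq_zero_of_commute_of_trace_eq_zero {K V : Type*} [Field K] [CharZero K]
    [AddCommGroup V] [Module K V] [FiniteDimensional K V] {A : Module.End K V}
    (hA : ∀ T, T * A = A * T) (htr : LinearMap.trace K V A = 0) : A = 0 := by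
  obtain ⟨c, rfl⟩ := (Algebra.IsCentral.mem_center_iff (K := K)).1 (Subalgebra.mem_center_iff.2 hA)
  rw [Algebra.algebraMap_eq_smul_one, map_smul, LinearMap.trace_one, smul_eq_mul] at htr
  rcases mul_eq_zero.1 htr with rfl | hn
  · simp
  · have : Subsingleton V := Module.finrank_zero_iff.1 (by exact_mod_cast hn)
    exact Subsingleton.elim _ _

lemma LinearMap.mem_of_forall_smulRight_mem {K V E : Type*} [Field K] [AddCommGroup V]
    [Module K V] [FiniteDimensional K V] [AddCommGroup E] [Module K E] [FiniteDimensional K E]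
    (N : Submodule K (V →ₗ[K] E)) (ω : V →ₗ[K] E)
    (hω : ∀ X, (∀ φ : Module.Dual K V, (∀ S, φ.smulRight S ∈ N) → φ X = 0) → ω X = 0) :
    ω ∈ N := by
  let U : Submodule K (Module.Dual K V) := ⨅ S : E, N.comap (LinearMap.smulRightₗ.flip S)
  have hU : ∀ φ, φ ∈ U ↔ ∀ S, φ.smulRight S ∈ N := by simp [U]
  have hcoord : ∀ φ : Module.Dual K V, (∀ X, ω X = 0 → φ X = 0) → φ ∈ U := fun φ hφ => by
    rw [← Subspace.dualCoannihilator_dualAnnihilator_eq (W := U), Submodule.mem_dualAnnihilator]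
    exact fun X hX => hφ X <| hω X fun ψ hψ =>
      (Submodule.mem_dualCoannihilator _).1 hX ψ ((hU ψ).2 hψ)
  let c := Module.finBasis K E
  have hsum : ω = ∑ j, (c.coord j ∘ₗ ω).smulRight (c j) := by
    ext X; simp [c.sum_repr]
  rw [hsum]
  exact Submodule.sum_mem _ fun j _ => (hU _).1 (hcoord _ fun X hX => by simp [hX]) _

section Bimodule

variable {V H : Type*} [AddCommGroup V] [Module ℝ V] [NormedAddCommGroup H] [InnerProductSpace ℂ H]

def IsBimodule (N : Submodule ℂ (V →ₗ[ℝ] Module.End ℂ H)) : Prop :=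
  ∀ ω ∈ N, ∀ S : Module.End ℂ H,
    LinearMap.mulLeft ℝ S ∘ₗ ω ∈ N ∧ LinearMap.mulRight ℝ S ∘ₗ ω ∈ N

variable (H) in
noncomputable def matrixCoeff (ξ η : H) : Module.End ℂ H →ₗ[ℝ] ℂ :=
  (innerₛₗ ℂ ξ ∘ₗ LinearMap.applyₗ η).restrictScalars ℝ

@[simp]
lemma matrixCoeff_apply (ξ η : H) (A : Module.End ℂ H) : matrixCoeff H ξ η A = ⟪ξ, A η⟫_ℂ := rfl

lemma conj_matrixCoeff [FiniteDimensional ℂ H] (ξ η : H) (A : Module.End ℂ H) :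
    starRingEnd ℂ (matrixCoeff H ξ η A) = matrixCoeff H η ξ (LinearMap.adjoint A) := by
  simp [LinearMap.adjoint_inner_right]

lemma sum_mul_rankOne_mul_mul_rankOne {ι : Type*} [Fintype ι] (b : OrthonormalBasis ι ℂ H)
    (S A : Module.End ℂ H) (ξ η : H) :
    ∑ i, S * (rankOne ℂ (b i) ξ : Module.End ℂ H) * A * (rankOne ℂ η (b i) : Module.End ℂ H) =
      ⟪ξ, A η⟫_ℂ • S := by
  ext w
  conv_rhs => rw [← b.sum_repr' w]
  simp [smul_smul, mul_comm]

lemma IsBimodule.matrixCoeff_comp_smulRight_mem [FiniteDimensional ℂ H]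
    {N : Submodule ℂ (V →ₗ[ℝ] Module.End ℂ H)} (hN : IsBimodule N)
    {ω : V →ₗ[ℝ] Module.End ℂ H} (hω : ω ∈ N) (ξ η : H) (S : Module.End ℂ H) : (matrixCoeff H ξ η ∘ₗ ω).smulRight S ∈ N := by
  let b := stdOrthonormalBasis ℂ H
  have hsum : (matrixCoeff H ξ η ∘ₗ ω).smulRight S = ∑ i,
      LinearMap.mulLeft ℝ (S * (rankOne ℂ (b i) ξ : Module.End ℂ H)) ∘ₗ
        (LinearMap.mulRight ℝ (rankOne ℂ η (b i) : Module.End ℂ H) ∘ₗ ω) := by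
    ext X : 1
    simp [← sum_mul_rankOne_mul_mul_rankOne b S (ω X), mul_assoc]
  rw [hsum]
  exact Submodule.sum_mem _ fun i _ => (hN _ (hN ω hω _).2 _).1

lemma reLm_comp_smulRight_mem {E : Type*} [AddCommGroup E] [Module ℂ E]
    {N : Submodule ℂ (V →ₗ[ℝ] E)} {f g : V →ₗ[ℝ] ℂ} (hfg : ∀ X, g X = starRingEnd ℂ (f X))
    {S : E} (hf : f.smulRight S ∈ N) (hg : g.smulRight S ∈ N) :
    (Complex.reLm ∘ₗ f).smulRight S ∈ N := by
  have : (Complex.reLm ∘ₗ f).smulRight S = (2⁻¹ : ℂ) • (f.smulRight S + g.smulRight S) := by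
    ext X
    simp only [LinearMap.smulRight_apply, LinearMap.comp_apply, Complex.reLm_coe,
      LinearMap.smul_apply, LinearMap.add_apply, hfg, smul_smul, ← add_smul, ← Complex.coe_smul,
      Complex.re_eq_add_conj]
    congr 1
    ring
  rw [this]
  exact N.smul_mem _ (N.add_mem hf hg)

lemma LinearMap.eq_zero_of_forall_re_inner_eq_zero {A : Module.End ℂ H}
    (hA : ∀ ξ η, (⟪ξ, A η⟫_ℂ).re = 0) : A = 0 :=
  LinearMap.ext fun η => (re_inner_self_nonpos (𝕜 := ℂ)).1 (hA (A η) η).le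

end Bimodule

section genBimod

variable {𝔤 H : Type*} [LieRing 𝔤] [LieAlgebra ℝ 𝔤] [NormedAddCommGroup H] [InnerProductSpace ℂ H]
  {π₀ : 𝔤 →ₗ[ℝ] Module.End ℂ H}

lemma dmap_apply (T : Module.End ℂ H) (X : 𝔤) : dmap 𝔤 H π₀ T X = π₀ X * T - T * π₀ X := rfl

lemma adjoint_dmap [FiniteDimensional ℂ H] (hskew : ∀ X : 𝔤, LinearMap.adjoint (π₀ X) = -π₀ X)
    (T : Module.End ℂ H) (X : 𝔤) :
    LinearMap.adjoint (dmap 𝔤 H π₀ T X) = dmap 𝔤 H π₀ (LinearMap.adjoint T) X := by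
  simp only [dmap_apply, map_sub, Module.End.mul_eq_comp, LinearMap.adjoint_comp, hskew,
    LinearMap.comp_neg, LinearMap.neg_comp]
  abel

lemma isBimodule_genBimod : IsBimodule (genBimod 𝔤 H π₀) := fun ω hω S =>
  ⟨Submodule.mem_sInf.2 fun _ hM => hM.2 ω (Submodule.mem_sInf.1 hω _ hM) S |>.1,
    Submodule.mem_sInf.2 fun _ hM => hM.2 ω (Submodule.mem_sInf.1 hω _ hM) S |>.2⟩

lemma dmap_mem_genBimod (T : Module.End ℂ H) : dmap 𝔤 H π₀ T ∈ genBimod 𝔤 H π₀ :=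
  Submodule.mem_sInf.2 fun _ hM => hM.1 T

lemma genBimod_le {N : Submodule ℂ (𝔤 →ₗ[ℝ] Module.End ℂ H)} (hN : IsBimodule N)
    (hd : ∀ T, dmap 𝔤 H π₀ T ∈ N) : genBimod 𝔤 H π₀ ≤ N :=
  sInf_le ⟨hd, hN⟩

variable (π₀) in
def vanishingOnKer : Submodule ℂ (𝔤 →ₗ[ℝ] Module.End ℂ H) where
  carrier := {ω | ∀ X, π₀ X = 0 → ω X = 0}
  add_mem' ha hb X hX := by simp [ha X hX, hb X hX]
  zero_mem' _ _ := rfl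
  smul_mem' c ω hω X hX := by simp [hω X hX]

lemma genBimod_le_vanishingOnKer : genBimod 𝔤 H π₀ ≤ vanishingOnKer π₀ :=
  genBimod_le (fun ω hω S => ⟨fun X hX => by simp [hω X hX], fun X hX => by simp [hω X hX]⟩)
    fun T X hX => by simp [dmap_apply, hX]

lemma vanishingOnKer_le_genBimod [FiniteDimensional ℂ H] [Module.Finite ℝ 𝔤]
    (hskew : ∀ X : 𝔤, LinearMap.adjoint (π₀ X) = -π₀ X)
    (htrace : ∀ X : 𝔤, LinearMap.trace ℂ H (π₀ X) = 0) :
    vanishingOnKer π₀ ≤ genBimod 𝔤 H π₀ := by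
  intro ω hω
  refine LinearMap.mem_of_forall_smulRight_mem ((genBimod 𝔤 H π₀).restrictScalars ℝ) ω
    fun X hX => hω X ?_
  have hd : ∀ T, dmap 𝔤 H π₀ T X = 0 := fun T =>
    LinearMap.eq_zero_of_forall_re_inner_eq_zero fun ξ η => hX _ fun S =>
      reLm_comp_smulRight_mem
        (fun Y => by simp only [LinearMap.comp_apply, conj_matrixCoeff, adjoint_dmap hskew])
        (isBimodule_genBimod.matrixCoeff_comp_smulRight_mem (dmap_mem_genBimod T) ξ η S)
        (isBimodule_genBimod.matrixCoeff_comp_smulRight_mem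
          (dmap_mem_genBimod (LinearMap.adjoint T)) η ξ S)
  exact Module.End.eq_zero_of_commute_of_trace_eq_zero
    (fun T => (sub_eq_zero.1 (hd T)).symm) (htrace X)

end genBimod

theorem statement15_general
    (𝔤 : Type*) [LieRing 𝔤] [LieAlgebra ℝ 𝔤] [Module.Finite ℝ 𝔤]
    -- 𝔤 is the Lie algebra of a compact connected semisimple Lie group
    (hcpt : ∀ X : 𝔤, X ≠ 0 → 0 < - killingForm ℝ 𝔤 X X)
    (H : Type*) [NormedAddCommGroup H] [InnerProductSpace ℂ H] [FiniteDimensional ℂ H]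
    -- the induced representation of 𝔤: by skew-adjoint operators, irreducible
    (π₀ : 𝔤 →ₗ[ℝ] Module.End ℂ H)
    (hπbracket : ∀ X Y : 𝔤, π₀ ⁅X, Y⁆ = π₀ X * π₀ Y - π₀ Y * π₀ X)
    (hskew : ∀ X : 𝔤, LinearMap.adjoint (π₀ X : H →ₗ[ℂ] H) = - (π₀ X : H →ₗ[ℂ] H)) :
    -- the bimodule generated by the range of d is B ⊗ 𝔤_λ', the maps vanishing
    -- on 𝔤₀ = ker π₀ ...
    (genBimod 𝔤 H π₀ : Set (𝔤 →ₗ[ℝ] Module.End ℂ H)) =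
      {ω : 𝔤 →ₗ[ℝ] Module.End ℂ H | ∀ X : 𝔤, π₀ X = 0 → ω X = 0} ∧
    (Function.Injective π₀ → genBimod 𝔤 H π₀ = ⊤) := by
  have : IsKilling ℝ 𝔤 := isKilling_of_killingForm_self_eq_zero fun X hX =>
    by_contra fun hne => (hcpt X hne).ne' (by rw [hX, neg_zero])
  have htrace := trace_eq_zero_of_derivedSeries_eq_top derivedSeries_one_eq_top_of_isKilling π₀
    hπbracket
  have heq : genBimod 𝔤 H π₀ = vanishingOnKer π₀ :=
    le_antisymm genBimod_le_vanishingOnKer (vanishingOnKer_le_genBimod hskew htrace)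
  refine ⟨congrArg SetLike.coe heq, fun hinj => ?_⟩
  rw [heq, eq_top_iff]
  intro ω _ X hX
  rw [hinj (hX.trans (map_zero π₀).symm), map_zero]

theorem statement15
    (𝔤 : Type*) [LieRing 𝔤] [LieAlgebra ℝ 𝔤] [Module.Finite ℝ 𝔤]
    -- 𝔤 is the Lie algebra of a compact connected semisimple Lie group
    (hcpt : ∀ X : 𝔤, X ≠ 0 → 0 < - killingForm ℝ 𝔤 X X)
    (H : Type*) [NormedAddCommGroup H] [InnerProductSpace ℂ H] [FiniteDimensional ℂ H]
    [Nontrivial H]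
    -- the induced representation of 𝔤: by skew-adjoint operators, irreducible
    (π₀ : 𝔤 →ₗ[ℝ] Module.End ℂ H)
    (hπbracket : ∀ X Y : 𝔤, π₀ ⁅X, Y⁆ = π₀ X * π₀ Y - π₀ Y * π₀ X)
    (hskew : ∀ X : 𝔤, LinearMap.adjoint (π₀ X : H →ₗ[ℂ] H) = - (π₀ X : H →ₗ[ℂ] H))
    (hirr : ∀ p : Submodule ℂ H, (∀ (X : 𝔤), ∀ v ∈ p, π₀ X v ∈ p) → p = ⊥ ∨ p = ⊤) :
    -- the bimodule generated by the range of d is B ⊗ 𝔤_λ', the maps vanishing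
    -- on 𝔤₀ = ker π₀ ...
    (genBimod 𝔤 H π₀ : Set (𝔤 →ₗ[ℝ] Module.End ℂ H)) =
      {ω : 𝔤 →ₗ[ℝ] Module.End ℂ H | ∀ X : 𝔤, π₀ X = 0 → ω X = 0} ∧
    (Function.Injective π₀ → genBimod 𝔤 H π₀ = ⊤) :=
  statement15_general 𝔤 hcpt H π₀ hπbracket hskew
end
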